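/- Every subdivision of K_5 in which at least one edge is subdivided, together with one additional path joining an internal (degree-2) vertex of a subdivided edge to a vertex not on that subdivided edge, edge-disjoint from the subdivision, contains an immersion of K_{3,3}. -/

import Mathlib

/-- A finite multigraph without loops: vertices `V`, edges `E`,
each edge has an unordered pair of distinct endpoints. -/
structure Multigraph where
  V : Type
  E : Type
  [fV : Fintype V]
  [fE : Fintype E]
  [dV : DecidableEq V]
  [dE : DecidableEq E]
  ends : E → Sym2 V
  noLoop : ∀ e, ¬ (ends e).IsDiag

attribute [instance] Multigraph.fV Multigraph.fE Multigraph.dV Multigraph.dE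

namespace Multigraph

/-- Walks in a multigraph. -/
inductive Walk (G : Multigraph) : G.V → G.V → Type
  | nil (v : G.V) : Walk G v v
  | cons {u v w : G.V} (e : G.E) (h : G.ends e = s(u, v)) (p : Walk G v w) : Walk G u w

/-- The list of edges traversed by a walk. -/
def Walk.edges {G : Multigraph} : {u v : G.V} → G.Walk u v → List G.E
  | _, _, .nil _ => []
  | _, _, .cons e _ p => e :: p.edges

/-- The list of vertices visited by a walk. -/
def Walk.support {G : Multigraph} : {u v : G.V} → G.Walk u v → List G.V
  | u, _, .nil _ => [u]
  | u, _, .cons _ _ p => u :: p.support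

/-- A walk is a path if it visits no vertex twice. -/
def Walk.IsPath {G : Multigraph} {u v : G.V} (p : G.Walk u v) : Prop := p.support.Nodup

/-- Data of an immersion of `H` into `G`: an injective map on vertices and,
for each edge of `H`, a path in `G` joining the images of its endpoints,
the paths being pairwise edge-disjoint. -/
structure ImmersionData (H G : Multigraph) where
  vmap : H.V → G.V
  inj : Function.Injective vmap
  pstart : H.E → G.V
  pend : H.E → G.V
  walk : ∀ e, G.Walk (pstart e) (pend e)
  ends_eq : ∀ e, s(pstart e, pend e) = (H.ends e).map vmap
  isPath : ∀ e, (walk e).IsPath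
  edgeDisj : ∀ e e', e ≠ e' → List.Disjoint (walk e).edges (walk e').edges

/-- `H` immerses in `G`. -/
def Immerses (H G : Multigraph) : Prop := Nonempty (ImmersionData H G)

/-- Data witnessing that `G` contains a subdivision of `H` as a subgraph
(i.e. `H` is a topological minor of `G`): as an immersion, but moreover the
paths may only meet at images of common endpoints. -/
structure SubdivisionData (H G : Multigraph) extends ImmersionData H G where
  vtxDisj : ∀ e e', e ≠ e' → ∀ x, x ∈ (walk e).support → x ∈ (walk e').support →
    ∃ w, x = vmap w ∧ w ∈ H.ends e ∧ w ∈ H.ends e'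

/-- `G` contains a subdivision of `H` as a subgraph. -/
def ContainsSubdivision (H G : Multigraph) : Prop := Nonempty (SubdivisionData H G)

/-- The complete bipartite graph `K_{3,3}`. -/
def K33 : Multigraph where
  V := Fin 3 ⊕ Fin 3
  E := Fin 3 × Fin 3
  ends e := s(Sum.inl e.1, Sum.inr e.2)
  noLoop e := by simp [Sym2.mk_isDiag_iff]

/-- The complete graph `K_5`. -/
def K5 : Multigraph where
  V := Fin 5
  E := {p : Fin 5 × Fin 5 // p.1 < p.2}
  ends e := s(e.1.1, e.1.2)
  noLoop e := by simpa [Sym2.mk_isDiag_iff] using e.2.ne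

variable (G : Multigraph)

/-- The degree of a vertex: the number of incident edges. -/
def deg (v : G.V) : ℕ := (Finset.univ.filter fun e => v ∈ G.ends e).card

/-- The multiplicity of the (possible) edge between `u` and `v`. -/
def mult (u v : G.V) : ℕ := (Finset.univ.filter fun e => G.ends e = s(u, v)).card

/-- The edge cut determined by a set `A` of vertices. -/
def cut (A : Finset G.V) : Finset G.E :=
  Finset.univ.filter fun e => ∃ u ∈ A, ∃ v ∈ Aᶜ, G.ends e = s(u, v)

/-- Every edge cut of `G` has at least `k` edges. -/
def EdgeConnGe (k : ℕ) : Prop :=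
  ∀ A : Finset G.V, A.Nonempty → A ≠ Finset.univ → k ≤ (G.cut A).card

/-- Internally 4-edge-connected: 3-edge-connected and every 3-edge cut has a
side consisting of a single vertex. -/
def Internally4EC : Prop :=
  G.EdgeConnGe 3 ∧ ∀ A : Finset G.V, A.Nonempty → A ≠ Finset.univ →
    (G.cut A).card = 3 → A.card = 1 ∨ Aᶜ.card = 1

/-- Weakly 5-edge-connected: internally 4-edge-connected and every 4-edge cut
has a side with at most two vertices. -/
def Weakly5EC : Prop :=
  G.Internally4EC ∧ ∀ A : Finset G.V, A.Nonempty → A ≠ Finset.univ →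
    (G.cut A).card = 4 → A.card ≤ 2 ∨ Aᶜ.card ≤ 2

/-- `G` is `d`-regular. -/
def IsRegular (d : ℕ) : Prop := ∀ v, G.deg v = d

/-- `G` is connected. -/
def Connected : Prop := ∀ u v : G.V, Nonempty (G.Walk u v)

/-- `v` is a cut-vertex: the remaining vertices split into two nonempty parts
with no edge between them. -/
def IsCutVertex (v : G.V) : Prop :=
  ∃ C D : Finset G.V, C.Nonempty ∧ D.Nonempty ∧ Disjoint C D ∧ v ∉ C ∧ v ∉ D ∧
    (∀ x : G.V, x ∈ C ∪ D ∨ x = v) ∧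
    ∀ e : G.E, ¬ ∃ u ∈ C, ∃ w ∈ D, G.ends e = s(u, w)

/-- `G` is 2-connected. -/
def TwoConnected : Prop :=
  G.Connected ∧ 3 ≤ Fintype.card G.V ∧ ∀ v, ¬ G.IsCutVertex v

/-- Planarity, via Kuratowski's characterization: no subdivision of `K_5`
nor of `K_{3,3}` as a subgraph. -/
def Planar : Prop := ¬ ContainsSubdivision K5 G ∧ ¬ ContainsSubdivision K33 G

end Multigraph

/-!
The interior vertex `x` splits its branch path `P_ab` into two halves, so together with `Q` it
has three edge-disjoint routes and can serve as a branch vertex of a `K_{3,3}`. If `Q` ends at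
a branch vertex `c`, or can be continued along the branch path through `y` to an end `c` outside
`{a, b}`, the sides are `{x, d, e}` and `{a, b, c}`, where `d, e` are the two remaining branch
vertices. Otherwise `y` is interior to a branch path `P_cd` with `{c, d}` disjoint from `{a, b}`,
and splitting it as well gives the sides `{x, c, d}` and `{y, a, b}`. In either case the nine
routes are pieces of `Q` and of distinct branch paths, hence pairwise edge-disjoint.
-/

theorem Multiset.disjoint_of_nodup_sum {ι α : Type*} [Fintype ι] [DecidableEq ι]
    {f : ι → Multiset α} (h : (∑ k, f k).Nodup) {i j : ι} (hij : i ≠ j) :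
    Disjoint (f i) (f j) := by
  have hle : f i + f j ≤ ∑ k, f k := by
    rw [← Finset.sum_pair hij]
    exact Finset.sum_le_sum_of_subset (Finset.subset_univ _)
  exact (Multiset.nodup_add.mp (Multiset.nodup_of_le hle h)).2.2

namespace Multigraph

variable {G : Multigraph}

namespace Walk

def append : {u v w : G.V} → G.Walk u v → G.Walk v w → G.Walk u w
  | _, _, _, .nil _, q => q
  | _, _, _, .cons e h p, q => .cons e h (p.append q)

@[simp] lemma edges_append {u v w : G.V} (p : G.Walk u v) (q : G.Walk v w) :
    (p.append q).edges = p.edges ++ q.edges := by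
  induction p with
  | nil => rfl
  | cons e h p ih => simp [append, edges, ih]

def reverse : {u v : G.V} → G.Walk u v → G.Walk v u
  | _, _, .nil v => .nil v
  | _, _, .cons e h p => p.reverse.append (.cons e (by rw [h, Sym2.eq_swap]) (.nil _))

@[simp] lemma edges_reverse {u v : G.V} (p : G.Walk u v) :
    p.reverse.edges = p.edges.reverse := by
  induction p with
  | nil => rfl
  | cons e h p ih => simp [reverse, edges, ih]

@[simp] lemma start_mem_support {u v : G.V} (p : G.Walk u v) : u ∈ p.support := by
  cases p <;> simp [support]

@[simp] lemma end_mem_support {u v : G.V} (p : G.Walk u v) : v ∈ p.support := by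
  induction p with
  | nil => simp [support]
  | cons e h p ih => simp [support, ih]

lemma mem_support_of_mem_edges {u v : G.V} (p : G.Walk u v) {e : G.E} (he : e ∈ p.edges)
    {z : G.V} (hz : z ∈ G.ends e) : z ∈ p.support := by
  induction p with
  | nil => simp [edges] at he
  | cons e' h p ih =>
    simp only [edges, List.mem_cons] at he
    rcases he with rfl | he
    · rw [h, Sym2.mem_iff] at hz
      rcases hz with rfl | rfl <;> simp [support]
    · simp [support, ih he]

lemma IsPath.edges_nodup {u v : G.V} {p : G.Walk u v} (hp : p.IsPath) : p.edges.Nodup := by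
  induction p with
  | nil => simp [edges]
  | cons e h p ih =>
    simp only [IsPath, support, List.nodup_cons] at hp
    refine List.nodup_cons.mpr ⟨fun he => ?_, ih hp.2⟩
    exact hp.1 (mem_support_of_mem_edges p he (by rw [h]; exact Sym2.mem_mk_left _ _))

lemma exists_split {u v : G.V} (p : G.Walk u v) {x : G.V} (hx : x ∈ p.support) :
    ∃ (q : G.Walk u x) (r : G.Walk x v),
      q.edges ++ r.edges = p.edges ∧ r.support.Sublist p.support := by
  induction p with
  | nil w =>
    obtain rfl : x = w := by simpa [support] using hx
    exact ⟨.nil _, .nil _, rfl, by simp⟩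
  | cons e h p ih =>
    rename_i a _ _
    by_cases hxa : x = a
    · subst hxa
      exact ⟨.nil _, .cons e h p, rfl, List.Sublist.refl _⟩
    · obtain ⟨q, r, hqr, hsub⟩ := ih (by simpa [support, hxa] using hx)
      exact ⟨.cons e h q, r, by simp [edges, ← hqr], hsub.trans (by simp [support])⟩

lemma exists_path {u v : G.V} (p : G.Walk u v) :
    ∃ q : G.Walk u v, q.IsPath ∧ q.edges ⊆ p.edges := by
  induction p with
  | nil w => exact ⟨.nil _, by simp [IsPath, support], by simp⟩
  | cons e h p ih =>
    rename_i a _ _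
    obtain ⟨q, hq, hsub⟩ := ih
    by_cases ha : a ∈ q.support
    · obtain ⟨_, r, hqr, hrsub⟩ := q.exists_split ha
      refine ⟨r, hrsub.nodup hq, fun ed hed => List.mem_cons_of_mem _ (hsub ?_)⟩
      rw [← hqr]
      exact List.mem_append_right _ hed
    · refine ⟨.cons e h q, by simpa [IsPath, support, ha] using hq, ?_⟩
      exact List.cons_subset_cons _ hsub

lemma exists_halves {u v : G.V} (p : G.Walk u v) {x : G.V} (hx : x ∈ p.support) :
    ∃ (q : G.Walk x u) (r : G.Walk x v),
      (q.edges + r.edges : Multiset G.E) = p.edges := by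
  obtain ⟨q, r, hqr, -⟩ := p.exists_split hx
  exact ⟨q.reverse, r, by simp [← hqr]⟩

end Walk

lemma immerses_K33_of_walks {u₀ u₁ u₂ w₀ w₁ w₂ : G.V} (huw : [u₀, u₁, u₂, w₀, w₁, w₂].Nodup)
    (W₀₀ : G.Walk u₀ w₀) (W₀₁ : G.Walk u₀ w₁) (W₀₂ : G.Walk u₀ w₂)
    (W₁₀ : G.Walk u₁ w₀) (W₁₁ : G.Walk u₁ w₁) (W₁₂ : G.Walk u₁ w₂)
    (W₂₀ : G.Walk u₂ w₀) (W₂₁ : G.Walk u₂ w₁) (W₂₂ : G.Walk u₂ w₂)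
    (hnd : ((W₀₀.edges + W₀₁.edges + W₀₂.edges) + (W₁₀.edges + W₁₁.edges + W₁₂.edges) +
      (W₂₀.edges + W₂₁.edges + W₂₂.edges) : Multiset G.E).Nodup) : Immerses K33 G := by
  let T : Fin 3 × Fin 3 → Σ' a b : G.V, G.Walk a b := fun ij =>
    ![![⟨_, _, W₀₀⟩, ⟨_, _, W₀₁⟩, ⟨_, _, W₀₂⟩], ![⟨_, _, W₁₀⟩, ⟨_, _, W₁₁⟩, ⟨_, _, W₁₂⟩],
      ![⟨_, _, W₂₀⟩, ⟨_, _, W₂₁⟩, ⟨_, _, W₂₂⟩]] ij.1 ij.2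
  have hdisj : ∀ ij kl, ij ≠ kl →
      Disjoint ((T ij).2.2.edges : Multiset G.E) (T kl).2.2.edges := by
    refine fun ij kl =>
      Multiset.disjoint_of_nodup_sum (f := fun ij => ((T ij).2.2.edges : Multiset G.E)) ?_
    simp only [Fintype.sum_prod_type, Fin.sum_univ_three]
    exact hnd
  choose P hP hPsub using fun ij => (T ij).2.2.exists_path
  refine ⟨{
    vmap := Sum.elim ![u₀, u₁, u₂] ![w₀, w₁, w₂]
    inj := ?_
    pstart := fun ij => (T ij).1
    pend := fun ij => (T ij).2.1
    walk := P
    ends_eq := ?_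
    isPath := hP
    edgeDisj := fun ij kl hne => ?_ }⟩
  · simp only [List.nodup_cons, List.mem_cons, List.not_mem_nil, not_or] at huw
    rintro (i | i) (j | j) h <;> fin_cases i <;> fin_cases j <;> first | rfl | simp_all
  · rintro ⟨i, j⟩
    fin_cases i <;> fin_cases j <;> rfl
  · have := (Multiset.coe_disjoint _ _).mp (hdisj ij kl hne)
    exact List.disjoint_of_subset_left (hPsub ij) (List.disjoint_of_subset_right (hPsub kl) this)

namespace ImmersionData

variable {H : Multigraph} (S : ImmersionData H G)

lemma exists_endpoints (e : H.E) :
    ∃ a b, H.ends e = s(a, b) ∧ S.pstart e = S.vmap a ∧ S.pend e = S.vmap b := by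
  obtain ⟨⟨a, b⟩, hab⟩ := Quot.exists_rep (H.ends e)
  have h := S.ends_eq e
  rw [← hab] at h
  rcases Sym2.eq_iff.mp h with ⟨ha, hb⟩ | ⟨hb, ha⟩
  · exact ⟨a, b, hab.symm, ha, hb⟩
  · exact ⟨b, a, by rw [← hab, Sym2.eq_swap], hb, ha⟩

lemma vmap_mem_support {e : H.E} {a : H.V} (ha : a ∈ H.ends e) :
    S.vmap a ∈ (S.walk e).support := by
  have h : S.vmap a ∈ s(S.pstart e, S.pend e) := S.ends_eq e ▸ Sym2.mem_map.mpr ⟨a, ha, rfl⟩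
  rcases Sym2.mem_iff.mp h with h | h <;> simp [h]

lemma exists_walk {e : H.E} {a b : H.V} (he : H.ends e = s(a, b)) :
    ∃ W : G.Walk (S.vmap a) (S.vmap b), (W.edges : Multiset G.E) = (S.walk e).edges := by
  obtain ⟨a', b', he', ha, hb⟩ := S.exists_endpoints e
  generalize S.walk e = p
  revert p
  rw [ha, hb]
  intro p
  rcases Sym2.eq_iff.mp (he.symm.trans he') with ⟨rfl, rfl⟩ | ⟨rfl, rfl⟩
  · exact ⟨p, rfl⟩
  · exact ⟨p.reverse, by simp⟩

lemma exists_halves {e : H.E} {x : G.V} (hx : x ∈ (S.walk e).support) :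
    ∃ a b, ∃ (A : G.Walk x (S.vmap a)) (B : G.Walk x (S.vmap b)), H.ends e = s(a, b) ∧
      (A.edges + B.edges : Multiset G.E) = (S.walk e).edges := by
  obtain ⟨a, b, hab, ha, hb⟩ := S.exists_endpoints e
  refine ⟨a, b, ?_⟩
  generalize S.walk e = p at hx ⊢
  revert p
  rw [ha, hb]
  intro p hx
  obtain ⟨A, B, hAB⟩ := p.exists_halves hx
  exact ⟨A, B, hab, hAB⟩

lemma nodup_add_sum_edges {l : List G.E} (hl : l.Nodup) {fs : List H.E} (hfs : fs.Nodup)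
    (hdisj : ∀ f ∈ fs, l.Disjoint (S.walk f).edges) :
    ((l : Multiset G.E) + (fs.map fun f => ((S.walk f).edges : Multiset G.E)).sum).Nodup := by
  induction fs generalizing l with
  | nil => simpa using hl
  | cons f fs ih =>
    obtain ⟨hf, hfs⟩ := List.nodup_cons.mp hfs
    rw [List.map_cons, List.sum_cons, ← add_assoc, Multiset.coe_add]
    refine ih (List.nodup_append'.mpr ⟨hl, (S.isPath f).edges_nodup,
      hdisj f List.mem_cons_self⟩) hfs fun f' hf' => ?_
    refine List.disjoint_append_left.mpr ⟨hdisj f' (List.mem_cons_of_mem _ hf'), ?_⟩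
    exact S.edgeDisj f f' (by rintro rfl; exact hf hf')

end ImmersionData

namespace K5

lemma ends_injective : Function.Injective K5.ends := by
  rintro ⟨⟨a, b⟩, hab⟩ ⟨⟨c, d⟩, hcd⟩ h
  simp only [K5, Sym2.eq_iff] at h hab hcd
  rcases h with ⟨rfl, rfl⟩ | ⟨rfl, rfl⟩
  · rfl
  · omega

lemma exists_ends_eq {p q : K5.V} (h : p ≠ q) : ∃ f : K5.E, K5.ends f = s(p, q) := by
  rcases lt_or_gt_of_ne (α := Fin 5) h with h | h
  · exact ⟨⟨(p, q), h⟩, rfl⟩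
  · exact ⟨⟨(q, p), h⟩, Sym2.eq_swap⟩

lemma ends_ne {e : K5.E} {a b : K5.V} (he : K5.ends e = s(a, b)) : a ≠ b := by
  rintro rfl
  exact K5.noLoop e (he ▸ Sym2.mk_isDiag_iff.mpr rfl)

lemma exists_nodup_extend {a b c : K5.V} :
    [a, b, c].Nodup → ∃ d e : K5.V, [a, b, c, d, e].Nodup := by
  revert a b c
  decide

end K5

lemma ImmersionData.exists_K5_walk (S : ImmersionData K5 G) {p q : K5.V} (h : p ≠ q) :
    ∃ f : K5.E, K5.ends f = s(p, q) ∧ ∃ W : G.Walk (S.vmap p) (S.vmap q),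
      (W.edges : Multiset G.E) = (S.walk f).edges := by
  obtain ⟨f, hf⟩ := K5.exists_ends_eq h
  exact ⟨f, hf, S.exists_walk hf⟩

/-- Apart from `P_ab`, the `K_{3,3}` built here uses only branch paths with an end outside
`{a, b, c}`, so these are all that `X` has to avoid. -/
lemma immerses_K33_of_interior_to_branch (S : ImmersionData K5 G) {a b c : K5.V}
    (habc : [a, b, c].Nodup) {e0 : K5.E} (he0 : K5.ends e0 = s(a, b)) {x : G.V}
    (hx : x ∉ Set.range S.vmap) (Aa : G.Walk x (S.vmap a)) (Ab : G.Walk x (S.vmap b))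
    (hA : (Aa.edges + Ab.edges : Multiset G.E) = (S.walk e0).edges) (X : G.Walk x (S.vmap c))
    (hX : ∀ f, (f = e0 ∨ ∃ z ∈ K5.ends f, z ∉ [a, b, c]) → X.edges.Disjoint (S.walk f).edges) :
    Immerses K33 G := by
  obtain ⟨X', hX', hX'X⟩ := X.exists_path
  obtain ⟨d, e, habcde⟩ := K5.exists_nodup_extend habc
  simp only [List.nodup_cons, List.mem_cons, List.not_mem_nil, not_or] at habcde
  obtain ⟨fda, hda, Pda, hPda⟩ := S.exists_K5_walk (p := d) (q := a) (by grind)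
  obtain ⟨fdb, hdb, Pdb, hPdb⟩ := S.exists_K5_walk (p := d) (q := b) (by grind)
  obtain ⟨fdc, hdc, Pdc, hPdc⟩ := S.exists_K5_walk (p := d) (q := c) (by grind)
  obtain ⟨fea, hea, Pea, hPea⟩ := S.exists_K5_walk (p := e) (q := a) (by grind)
  obtain ⟨feb, heb, Peb, hPeb⟩ := S.exists_K5_walk (p := e) (q := b) (by grind)
  obtain ⟨fec, hec, Pec, hPec⟩ := S.exists_K5_walk (p := e) (q := c) (by grind)
  have hfs : [e0, fda, fdb, fdc, fea, feb, fec].Nodup := by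
    refine List.Nodup.of_map K5.ends ?_
    simp only [List.map_cons, List.map_nil, he0, hda, hdb, hdc, hea, heb, hec, List.nodup_cons,
      List.mem_cons, Sym2.eq_iff]
    grind
  have hfsX : ∀ f ∈ [e0, fda, fdb, fdc, fea, feb, fec],
      f = e0 ∨ ∃ z ∈ K5.ends f, z ∉ [a, b, c] := by
    simp only [List.mem_cons, List.not_mem_nil, or_false]
    rintro f (rfl | rfl | rfl | rfl | rfl | rfl | rfl) <;>
      simp only [hda, hdb, hdc, hea, heb, hec, Sym2.mem_iff, exists_eq_or_imp, exists_eq_left] <;>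
      grind
  have hvx : ∀ z, S.vmap z ≠ x := fun z h => hx ⟨z, h⟩
  refine immerses_K33_of_walks ?_ Aa Ab X' Pda Pdb Pdc Pea Peb Pec ?_
  · simp only [List.nodup_cons, List.mem_cons, List.not_mem_nil, not_or, S.inj.eq_iff]
    grind
  · convert S.nodup_add_sum_edges hX'.edges_nodup hfs
      fun f hf => List.disjoint_of_subset_left hX'X (hX f (hfsX f hf)) using 1
    simp only [List.map_cons, List.map_nil, List.sum_cons, List.sum_nil, ← hA, ← hPda, ← hPdb,
      ← hPdc, ← hPea, ← hPeb, ← hPec]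
    abel

lemma immerses_K33_of_interior_to_adjacent_interior (S : ImmersionData K5 G) {a b c d : K5.V}
    (habc : [a, b, c].Nodup) (hd : d = a ∨ d = b) {e0 e1 : K5.E} (he0 : K5.ends e0 = s(a, b))
    (he1 : K5.ends e1 = s(c, d)) {x y : G.V} (hx : x ∉ Set.range S.vmap)
    (Aa : G.Walk x (S.vmap a)) (Ab : G.Walk x (S.vmap b))
    (hA : (Aa.edges + Ab.edges : Multiset G.E) = (S.walk e0).edges)
    (Bc : G.Walk y (S.vmap c)) (hB : (Bc.edges : Multiset G.E) ≤ (S.walk e1).edges)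
    (Q : G.Walk x y) (hQ : ∀ f, Q.edges.Disjoint (S.walk f).edges) :
    Immerses K33 G := by
  refine immerses_K33_of_interior_to_branch S habc he0 hx Aa Ab hA (Q.append Bc) fun f hf => ?_
  have hf1 : e1 ≠ f := by
    rintro rfl
    simp only [List.nodup_cons, List.mem_cons, List.not_mem_nil, not_or] at habc
    rcases hf with hf | ⟨z, hz, hzabc⟩
    · rw [hf, he0, Sym2.eq_iff] at he1
      grind
    · rw [he1, Sym2.mem_iff] at hz
      grind
  rw [Walk.edges_append]
  refine List.disjoint_append_left.mpr ⟨hQ f, ?_⟩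
  exact List.disjoint_of_subset_left (Multiset.subset_of_le hB) (S.edgeDisj e1 f hf1)

lemma immerses_K33_of_interior_to_interior (S : ImmersionData K5 G) {a b c d : K5.V}
    (habcd : [a, b, c, d].Nodup) {e0 e1 : K5.E} (he0 : K5.ends e0 = s(a, b))
    (he1 : K5.ends e1 = s(c, d)) {x y : G.V} (hx : x ∉ Set.range S.vmap)
    (hy : y ∉ Set.range S.vmap) (hxy : x ≠ y)
    (Aa : G.Walk x (S.vmap a)) (Ab : G.Walk x (S.vmap b))
    (hA : (Aa.edges + Ab.edges : Multiset G.E) = (S.walk e0).edges)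
    (Bc : G.Walk y (S.vmap c)) (Bd : G.Walk y (S.vmap d))
    (hB : (Bc.edges + Bd.edges : Multiset G.E) = (S.walk e1).edges)
    (Q : G.Walk x y) (hQ : ∀ f, Q.edges.Disjoint (S.walk f).edges) :
    Immerses K33 G := by
  obtain ⟨Q', hQ', hQ'Q⟩ := Q.exists_path
  simp only [List.nodup_cons, List.mem_cons, List.not_mem_nil, not_or] at habcd
  obtain ⟨fca, hca, Pca, hPca⟩ := S.exists_K5_walk (p := c) (q := a) (by grind)
  obtain ⟨fcb, hcb, Pcb, hPcb⟩ := S.exists_K5_walk (p := c) (q := b) (by grind)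
  obtain ⟨fda, hda, Pda, hPda⟩ := S.exists_K5_walk (p := d) (q := a) (by grind)
  obtain ⟨fdb, hdb, Pdb, hPdb⟩ := S.exists_K5_walk (p := d) (q := b) (by grind)
  have hfs : [e0, e1, fca, fcb, fda, fdb].Nodup := by
    refine List.Nodup.of_map K5.ends ?_
    simp only [List.map_cons, List.map_nil, he0, he1, hca, hcb, hda, hdb, List.nodup_cons,
      List.mem_cons, Sym2.eq_iff]
    grind
  have hvx : ∀ z, S.vmap z ≠ x := fun z h => hx ⟨z, h⟩
  have hvy : ∀ z, S.vmap z ≠ y := fun z h => hy ⟨z, h⟩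
  refine immerses_K33_of_walks ?_ Q' Aa Ab Bc.reverse Pca Pcb Bd.reverse Pda Pdb ?_
  · simp only [List.nodup_cons, List.mem_cons, List.not_mem_nil, not_or, S.inj.eq_iff]
    grind
  · convert S.nodup_add_sum_edges hQ'.edges_nodup hfs
      fun f _ => List.disjoint_of_subset_left hQ'Q (hQ f) using 1
    simp only [List.map_cons, List.map_nil, List.sum_cons, List.sum_nil, Walk.edges_reverse,
      Multiset.coe_reverse, ← hA, ← hB, ← hPca, ← hPcb, ← hPda, ← hPdb]
    abel

end Multigraph

open Multigraph in
theorem k33_of_subdividedK5_plus_path_general (G : Multigraph)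
    (S : SubdivisionData K5 G) (e0 : K5.E) (x : G.V)
    (hx : x ∈ (S.walk e0).support) (hxint : x ∉ Set.range S.vmap)
    (y : G.V) (e1 : K5.E) (hy : y ∈ (S.walk e1).support)
    (hynot : y ∉ (S.walk e0).support)
    (Q : G.Walk x y)
    (hQdisj : ∀ e : K5.E, List.Disjoint Q.edges (S.walk e).edges) :
    Immerses K33 G := by
  obtain ⟨a, b, Aa, Ab, he0, hA⟩ := S.exists_halves hx
  have hab := K5.ends_ne he0
  by_cases hybranch : y ∈ Set.range S.vmap
  · obtain ⟨c, rfl⟩ := hybranch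
    have hca : c ≠ a := by
      rintro rfl
      exact hynot (S.vmap_mem_support (he0 ▸ Sym2.mem_mk_left c b))
    have hcb : c ≠ b := by
      rintro rfl
      exact hynot (S.vmap_mem_support (he0 ▸ Sym2.mem_mk_right a c))
    exact immerses_K33_of_interior_to_branch S.toImmersionData (by grind [List.nodup_cons]) he0 hxint Aa Ab hA
      Q fun f _ => hQdisj f
  obtain ⟨c, d, Bc, Bd, he1, hB⟩ := S.exists_halves hy
  have hcd := K5.ends_ne he1
  have he01 : K5.ends e1 ≠ K5.ends e0 := fun h => hynot (K5.ends_injective h ▸ hy)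
  rw [he0, he1, Ne, Sym2.eq_iff] at he01
  by_cases hc : c = a ∨ c = b
  · exact immerses_K33_of_interior_to_adjacent_interior S.toImmersionData (by grind [List.nodup_cons]) hc he0
      (he1.trans Sym2.eq_swap) hxint Aa Ab hA Bd (hB ▸ Multiset.le_add_left _ _) Q hQdisj
  by_cases hd : d = a ∨ d = b
  · exact immerses_K33_of_interior_to_adjacent_interior S.toImmersionData (by grind [List.nodup_cons]) hd he0
      he1 hxint Aa Ab hA Bc (hB ▸ Multiset.le_add_right _ _) Q hQdisj
  exact immerses_K33_of_interior_to_interior S.toImmersionData (by grind [List.nodup_cons]) he0 he1 hxint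
    hybranch (fun h => hynot (h ▸ hx)) Aa Ab hA Bc Bd hB Q hQdisj

open Multigraph in
/-- Every subdivision of `K_5` with at least one subdivided edge, together with
one additional path joining an internal (degree-2) vertex `x` of a subdivided
edge to a vertex `y` of the subdivision not on that subdivided edge, the path
being edge-disjoint from the subdivision, contains an immersion of `K_{3,3}`.
(The hypothesis `hcover` states that `G` consists exactly of the subdivision
together with the additional path.) -/
theorem k33_of_subdividedK5_plus_path (G : Multigraph)
    (S : SubdivisionData K5 G) (e0 : K5.E) (x : G.V)
    (hx : x ∈ (S.walk e0).support) (hxint : x ∉ Set.range S.vmap)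
    (y : G.V) (e1 : K5.E) (hy : y ∈ (S.walk e1).support)
    (hynot : y ∉ (S.walk e0).support)
    (Q : G.Walk x y) (hQ : Q.IsPath)
    (hQdisj : ∀ e : K5.E, List.Disjoint Q.edges (S.walk e).edges)
    (hcover : ∀ ed : G.E, ed ∈ Q.edges ∨ ∃ e : K5.E, ed ∈ (S.walk e).edges) :
    Immerses K33 G :=
  k33_of_subdividedK5_plus_path_general G S e0 x hx hxint y e1 hy hynot Q hQdisj
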